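/- arXiv:2503.19554 — 2 statements merged into one kernel-verified Lean document; each statement's English description precedes it below -/
import Mathlib

section
/- Unbiasedness of a single random Fourier feature for the RBF kernel. Let d ≥ 1 and σ > 0. Let ω be a random vector in ℝ^d with independent N(0, 1/σ²) coordinates, and let b be uniformly distributed on [0, 2π], independent of ω. Then for all x, x' ∈ ℝ^d, E[ 2 cos(ωᵀx + b) cos(ωᵀx' + b) ] = exp(−‖x − x'‖² / (2σ²)) = K_RBF(x, x'). -/
/-!
Averaging over the phase first, the product-to-sum formula
`2 cos A cos B = cos (A - B) + cos (A + B)` leaves `cos (ωᵀ(x - x'))`, because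
`cos (2b + c)` integrates to zero over a full period. The Gaussian average of
`cos (ωᵀy)` is the real part of the characteristic function of `ω` at `y`, which for
independent `N(0, σ⁻²)` coordinates factorises into `∏ exp (-yᵢ² / (2σ²))`.
-/

open MeasureTheory Matrix Real ProbabilityTheory

/-- The uniform probability measure on `[0, 2π]`. -/
noncomputable def unifPhase : Measure ℝ :=
  (ENNReal.ofReal (2 * π))⁻¹ • volume.restrict (Set.Icc 0 (2 * π))

instance : IsProbabilityMeasure unifPhase := by
  constructor
  rw [unifPhase, Measure.smul_apply, Measure.restrict_apply_univ, Real.volume_Icc,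
    smul_eq_mul]
  rw [show (2 * π - 0 : ℝ) = 2 * π by ring, ENNReal.inv_mul_cancel]
  · exact (ENNReal.ofReal_pos.mpr (by positivity)).ne'
  · exact ENNReal.ofReal_ne_top

/-- The RBF kernel with lengthscale `σ` on `ℝ^d`. -/
noncomputable def KRBF {d : ℕ} (σ : ℝ) (x x' : Fin d → ℝ) : ℝ :=
  Real.exp (-(∑ i, (x i - x' i) ^ 2) / (2 * σ ^ 2))

lemma integral_cos_two_mul_add_unifPhase (c : ℝ) : ∫ b, cos (2 * b + c) ∂unifPhase = 0 := by
  rw [unifPhase, integral_smul_measure, integral_Icc_eq_integral_Ioc,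
    ← intervalIntegral.integral_of_le (by positivity),
    intervalIntegral.integral_comp_mul_add cos two_ne_zero, integral_cos]
  simp [show 2 * (2 * π) + c = c + 2 * π + 2 * π by ring]

lemma integral_two_mul_cos_add_mul_cos_add_unifPhase (u u' : ℝ) :
    ∫ b, 2 * cos (u + b) * cos (u' + b) ∂unifPhase = cos (u - u') := by
  have product_to_sum (b : ℝ) :
      2 * cos (u + b) * cos (u' + b) = cos (u - u') + cos (2 * b + (u + u')) := by
    rw [show u - u' = (u + b) - (u' + b) by ring,
      show 2 * b + (u + u') = (u + b) + (u' + b) by ring, cos_sub (u + b), cos_add (u + b)]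
    ring
  simp_rw [product_to_sum]
  have hint : Integrable (fun b ↦ cos (2 * b + (u + u'))) unifPhase :=
    .of_bound (by fun_prop) 1 (ae_of_all _ fun b ↦ abs_cos_le_one _)
  rw [integral_add (integrable_const _) hint, integral_cos_two_mul_add_unifPhase]
  simp

section Pi

variable {ι : Type*} [Fintype ι]

open Complex in
lemma integral_cexp_dotProduct_pi (μ : ι → Measure ℝ) [∀ i, SigmaFinite (μ i)]
    (y : ι → ℝ) : ∫ ω, cexp ((ω ⬝ᵥ y : ℝ) * I) ∂Measure.pi μ = ∏ i, charFun (μ i) (y i) := by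
  simp_rw [charFun_apply_real, ← integral_fintype_prod_eq_prod, ← Complex.exp_sum, dotProduct,
    ofReal_sum, Finset.sum_mul, ofReal_mul, mul_comm (y _ : ℂ)]

lemma integral_cos_dotProduct_pi (μ : ι → Measure ℝ) [∀ i, IsFiniteMeasure (μ i)]
    (y : ι → ℝ) : ∫ ω, cos (ω ⬝ᵥ y) ∂Measure.pi μ = (∏ i, charFun (μ i) (y i)).re := by
  have hint : Integrable (fun ω : ι → ℝ ↦ Complex.exp ((ω ⬝ᵥ y : ℝ) * Complex.I))
      (Measure.pi μ) :=
    (integrable_const (1 : ℝ)).mono' (by fun_prop) (ae_of_all _ fun ω ↦ by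
      rw [Complex.norm_exp_ofReal_mul_I])
  simp_rw [← integral_cexp_dotProduct_pi, ← Complex.exp_ofReal_mul_I_re]
  exact integral_re hint

lemma integral_cos_dotProduct_pi_gaussianReal (v : NNReal) (y : ι → ℝ) :
    ∫ ω, cos (ω ⬝ᵥ y) ∂Measure.pi (fun _ ↦ gaussianReal 0 v)
      = exp (-(v * ∑ i, y i ^ 2) / 2) := by
  simp_rw [integral_cos_dotProduct_pi, charFun_gaussianReal, Complex.ofReal_zero, mul_zero,
    zero_mul, zero_sub, ← Complex.exp_sum]
  norm_cast
  rw [Finset.mul_sum, neg_div, Finset.sum_div, Finset.sum_neg_distrib]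

lemma integral_two_mul_cos_mul_cos_prod_unifPhase (μ : Measure (ι → ℝ)) [IsFiniteMeasure μ]
    (x x' : ι → ℝ) :
    ∫ ωb : (ι → ℝ) × ℝ, 2 * cos (ωb.1 ⬝ᵥ x + ωb.2) * cos (ωb.1 ⬝ᵥ x' + ωb.2) ∂μ.prod unifPhase
      = ∫ ω, cos (ω ⬝ᵥ (x - x')) ∂μ := by
  have hint : Integrable (fun ωb : (ι → ℝ) × ℝ ↦
      2 * cos (ωb.1 ⬝ᵥ x + ωb.2) * cos (ωb.1 ⬝ᵥ x' + ωb.2)) (μ.prod unifPhase) := by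
    refine .of_bound (by fun_prop) 2 (ae_of_all _ fun ωb ↦ ?_)
    have := mul_le_one₀ (abs_cos_le_one (ωb.1 ⬝ᵥ x + ωb.2)) (abs_nonneg _)
      (abs_cos_le_one (ωb.1 ⬝ᵥ x' + ωb.2))
    rw [norm_mul, norm_mul, Real.norm_two, mul_assoc, Real.norm_eq_abs, Real.norm_eq_abs]
    linarith
  rw [integral_prod _ hint]
  simp_rw [integral_two_mul_cos_add_mul_cos_add_unifPhase, dotProduct_sub]

end Pi

/-- Unbiasedness of a single random Fourier feature for the RBF kernel:
with `ω` having independent `N(0, 1/σ²)` coordinates and `b` uniform on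
`[0, 2π]` independent of `ω`,
`E[2 cos(ωᵀx + b) cos(ωᵀx' + b)] = K_RBF(x, x')`. -/
theorem stmt11 (d : ℕ) (σ : ℝ) (x x' : Fin d → ℝ) :
    ∫ ωb : (Fin d → ℝ) × ℝ,
        2 * Real.cos (ωb.1 ⬝ᵥ x + ωb.2) * Real.cos (ωb.1 ⬝ᵥ x' + ωb.2)
        ∂((Measure.pi fun _ : Fin d =>
              gaussianReal 0 (⟨(σ ^ 2)⁻¹, by positivity⟩ : NNReal)).prod unifPhase)
      = KRBF σ x x' := by
  -- the anonymous constructor has type `{r // 0 ≤ r}`, on which the measure instances are not found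
  set v : NNReal := ⟨(σ ^ 2)⁻¹, by positivity⟩
  rw [integral_two_mul_cos_mul_cos_prod_unifPhase, integral_cos_dotProduct_pi_gaussianReal, KRBF,
    show (v : ℝ) = (σ ^ 2)⁻¹ from rfl]
  simp only [Pi.sub_apply]
  congr 1
  ring
end

section
/- Pointwise concentration of the random Fourier feature kernel estimate. Let d, D ≥ 1, σ > 0, and fix x, x' ∈ ℝ^d. Let (ω_1, b_1), …, (ω_D, b_D) be independent random pairs, with each ω_i having independent N(0, 1/σ²) coordinates in ℝ^d and each b_i uniform on [0, 2π], independent of ω_i, and define z(x) = √(2/D)(cos(ω_iᵀx + b_i))_{i=1}^D. Then for every ε > 0, P( | z(x)ᵀ z(x') − K_RBF(x, x') | ≥ ε ) ≤ 2 exp(−D ε² / 8), where K_RBF(x, x') = exp(−‖x − x'‖²/(2σ²)). -/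
open MeasureTheory Matrix Real ProbabilityTheory

/-- The `D`-dimensional random Fourier feature map evaluated at `x`, given
frequencies/phases `w i = (ω_i, b_i)`:
`z(x) = √(2/D) (cos(ω_iᵀx + b_i))_{i=1}^D`. -/
noncomputable def rff (d D : ℕ) (w : Fin D → (Fin d → ℝ) × ℝ)
    (x : Fin d → ℝ) : Fin D → ℝ :=
  fun i => Real.sqrt (2 / D) * Real.cos ((w i).1 ⬝ᵥ x + (w i).2)

/-! The summand `2 cos(ωᵀx + b) cos(ωᵀx' + b) = cos(ωᵀ(x - x')) + cos(ωᵀ(x + x') + 2b)` of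
`D · z(x)ᵀz(x')` lies in `[-2, 2]`. Integrating out the uniform phase kills the second cosine, and
the characteristic function of the Gaussian frequency turns the first one into `K_RBF(x, x')`.
Hence `z(x)ᵀz(x')` is the empirical mean of `D` i.i.d. variables with range `4` and mean
`K_RBF(x, x')`, and Hoeffding's inequality bounds each tail by `exp(-2Dε² / 4²)`. -/

open scoped NNReal ENNReal

section Hoeffding

variable {α : Type*} [MeasurableSpace α] {ν : Measure α} [IsProbabilityMeasure ν]
  {f : α → ℝ} {a b : ℝ}

theorem hasSubgaussianMGF_sum_sub_integral (hf : Measurable f) (hab : ∀ p, f p ∈ Set.Icc a b)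
    (D : ℕ) :
    HasSubgaussianMGF (fun w : Fin D → α ↦ ∑ i, (f (w i) - ∫ p, f p ∂ν))
      (D * (‖b - a‖₊ / 2) ^ 2) (Measure.pi fun _ ↦ ν) := by
  have hsub := hasSubgaussianMGF_of_mem_Icc (μ := ν) hf.aemeasurable (ae_of_all _ hab)
  have hindep : iIndepFun (fun (i : Fin D) (w : Fin D → α) ↦ f (w i) - ∫ p, f p ∂ν)
      (Measure.pi fun _ ↦ ν) :=
    iIndepFun_pi (X := fun _ p ↦ f p - ∫ p, f p ∂ν) fun _ ↦ (hf.sub_const _).aemeasurable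
  have hsum := HasSubgaussianMGF.sum_of_iIndepFun hindep (s := Finset.univ)
    (c := fun _ ↦ (‖b - a‖₊ / 2) ^ 2) fun i _ ↦
      HasSubgaussianMGF.of_map (measurable_pi_apply i).aemeasurable
        (by rwa [(measurePreserving_eval (fun _ ↦ ν) i).map_eq])
  rw [Finset.sum_const, Finset.card_univ, Fintype.card_fin, nsmul_eq_mul] at hsum
  exact hsum

theorem measure_abs_mean_sub_integral_ge_le (hf : Measurable f) (hab : ∀ p, f p ∈ Set.Icc a b)
    (D : ℕ) {ε : ℝ} (hε : 0 ≤ ε) :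
    (Measure.pi fun _ : Fin D ↦ ν) {w | ε ≤ |(∑ i, f (w i)) / D - ∫ p, f p ∂ν|}
      ≤ ENNReal.ofReal (2 * exp (-2 * D * ε ^ 2 / (b - a) ^ 2)) := by
  set S : (Fin D → α) → ℝ := fun w ↦ ∑ i, (f (w i) - ∫ p, f p ∂ν)
  have hS : HasSubgaussianMGF S _ _ := hasSubgaussianMGF_sum_sub_integral hf hab D
  have hS_eq (w : Fin D → α) : S w = D * ((∑ i, f (w i)) / D - ∫ p, f p ∂ν) := by
    rcases eq_or_ne D 0 with rfl | hD
    · simp [S]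
    simp only [S, Finset.sum_sub_distrib, Finset.sum_const, Finset.card_univ, Fintype.card_fin,
      nsmul_eq_mul]
    field_simp
  have hsub : {w | ε ≤ |(∑ i, f (w i)) / D - ∫ p, f p ∂ν|}
      ⊆ {w | D * ε ≤ S w} ∪ {w | D * ε ≤ (-S) w} := by
    intro w hw
    have : D * ε ≤ |S w| := by
      rw [hS_eq, abs_mul, Nat.abs_cast]
      exact mul_le_mul_of_nonneg_left hw D.cast_nonneg
    exact le_abs.mp this
  have hexp : exp (-(D * ε) ^ 2 / (2 * (D * (‖b - a‖₊ / 2) ^ 2 : ℝ≥0)))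
      = exp (-2 * D * ε ^ 2 / (b - a) ^ 2) := by
    congr 1
    push_cast
    rw [Real.norm_eq_abs, div_pow, sq_abs]
    rcases eq_or_ne D 0 with rfl | hD
    · simp
    rcases eq_or_ne (b - a) 0 with hba | hba
    · simp [hba]
    field_simp
  have hDε : 0 ≤ (D : ℝ) * ε := by positivity
  calc _ ≤ _ := (measure_mono hsub).trans (measure_union_le _ _)
    _ = ENNReal.ofReal ((Measure.pi fun _ ↦ ν).real {w | D * ε ≤ S w})
        + ENNReal.ofReal ((Measure.pi fun _ ↦ ν).real {w | D * ε ≤ (-S) w}) := by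
      rw [ofReal_measureReal, ofReal_measureReal]
    _ ≤ ENNReal.ofReal (exp (-2 * D * ε ^ 2 / (b - a) ^ 2))
        + ENNReal.ofReal (exp (-2 * D * ε ^ 2 / (b - a) ^ 2)) := by
      rw [← hexp]
      gcongr
      exacts [hS.measure_ge_le hDε, hS.neg.measure_ge_le hDε]
    _ = _ := by rw [← ENNReal.ofReal_add (by positivity) (by positivity), two_mul]

end Hoeffding

theorem integral_cos_add_nat_mul_unifPhase (c : ℝ) {n : ℕ} (hn : n ≠ 0) :
    ∫ b, cos (c + n * b) ∂unifPhase = 0 := by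
  rw [unifPhase, integral_smul_measure, integral_Icc_eq_integral_Ioc,
    ← intervalIntegral.integral_of_le (by positivity),
    intervalIntegral.integral_comp_add_mul cos (Nat.cast_ne_zero.mpr hn), integral_cos,
    mul_zero, add_zero, sin_add_nat_mul_two_pi, sub_self, smul_zero, smul_zero]

theorem integral_cos_dotProduct_gaussianReal {d : ℕ} (v : ℝ≥0) (u : Fin d → ℝ) :
    ∫ ω, cos (ω ⬝ᵥ u) ∂(Measure.pi fun _ : Fin d ↦ gaussianReal 0 v)
      = exp (-(v * ∑ j, u j ^ 2) / 2) := by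
  have hcos_eq_re (ω : Fin d → ℝ) :
      cos (ω ⬝ᵥ u) = RCLike.re (∏ j, Complex.exp (u j * ω j * Complex.I)) := by
    simp only [← Complex.exp_sum, ← Finset.sum_mul, ← Complex.exp_ofReal_mul_I_re]
    push_cast [dotProduct]
    simp_rw [mul_comm]
    rfl
  have hint : Integrable (fun ω : Fin d → ℝ ↦ ∏ j, Complex.exp (u j * ω j * Complex.I))
      (Measure.pi fun _ : Fin d ↦ gaussianReal 0 v) := by
    refine (integrable_const (1 : ℝ)).mono' (Continuous.aestronglyMeasurable (by fun_prop))
      (ae_of_all _ fun ω ↦ ?_)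
    simp [norm_prod, ← Complex.ofReal_mul, Complex.norm_exp_ofReal_mul_I]
  simp_rw [hcos_eq_re]
  rw [integral_re hint,
    integral_fintype_prod_eq_prod (fun j (s : ℝ) ↦ Complex.exp (u j * s * Complex.I))]
  simp_rw [← charFun_apply_real, charFun_gaussianReal]
  have hsum : ∑ j, ((u j : ℂ) * (0 : ℝ) * Complex.I - (v : ℝ) * (u j : ℂ) ^ 2 / 2)
      = ((-(v * ∑ j, u j ^ 2) / 2 : ℝ) : ℂ) := by
    push_cast
    simp [Finset.mul_sum, Finset.sum_div, neg_div]
  rw [← Complex.exp_sum, hsum]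
  exact Complex.exp_ofReal_re _

section FourierFeatures

variable {d : ℕ}

noncomputable def fourierFeatureProduct (x x' : Fin d → ℝ) (p : (Fin d → ℝ) × ℝ) : ℝ :=
  2 * cos (p.1 ⬝ᵥ x + p.2) * cos (p.1 ⬝ᵥ x' + p.2)

variable (x x' : Fin d → ℝ)

theorem fourierFeatureProduct_mem_Icc (p : (Fin d → ℝ) × ℝ) :
    fourierFeatureProduct x x' p ∈ Set.Icc (-2) 2 := by
  rw [Set.mem_Icc, ← abs_le, fourierFeatureProduct, abs_mul, abs_mul, abs_two, mul_assoc]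
  exact mul_le_of_le_one_right zero_le_two
    (mul_le_one₀ (abs_cos_le_one _) (abs_nonneg _) (abs_cos_le_one _))

theorem measurable_fourierFeatureProduct : Measurable (fourierFeatureProduct x x') := by
  unfold fourierFeatureProduct dotProduct
  fun_prop

theorem fourierFeatureProduct_eq_cos_add_cos (p : (Fin d → ℝ) × ℝ) :
    fourierFeatureProduct x x' p = cos (p.1 ⬝ᵥ (x - x')) + cos (p.1 ⬝ᵥ (x + x') + 2 * p.2) := by
  rw [fourierFeatureProduct, dotProduct_sub, dotProduct_add, two_mul_cos_mul_cos]
  ring_nf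

theorem rff_dotProduct_rff (D : ℕ) (w : Fin D → (Fin d → ℝ) × ℝ) :
    rff d D w x ⬝ᵥ rff d D w x' = (∑ i, fourierFeatureProduct x x' (w i)) / D := by
  have hsqrt : √(2 / D) * √(2 / D) = 2 / D := mul_self_sqrt (by positivity)
  rw [dotProduct, Finset.sum_div]
  refine Finset.sum_congr rfl fun i _ ↦ ?_
  simp only [rff, fourierFeatureProduct]
  linear_combination cos ((w i).1 ⬝ᵥ x + (w i).2) * cos ((w i).1 ⬝ᵥ x' + (w i).2) * hsqrt

theorem integral_fourierFeatureProduct (v : ℝ≥0) :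
    ∫ p, fourierFeatureProduct x x' p
        ∂((Measure.pi fun _ : Fin d ↦ gaussianReal 0 v).prod unifPhase)
      = exp (-(v * ∑ j, (x j - x' j) ^ 2) / 2) := by
  have hphase (ω : Fin d → ℝ) :
      ∫ b, fourierFeatureProduct x x' (ω, b) ∂unifPhase = cos (ω ⬝ᵥ (x - x')) := by
    have hcos : Integrable (fun b ↦ cos (ω ⬝ᵥ (x + x') + (2 : ℕ) * b)) unifPhase :=
      .of_mem_Icc (-1) 1 (by fun_prop) (ae_of_all _ fun _ ↦ ⟨neg_one_le_cos _, cos_le_one _⟩)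
    simp_rw [fourierFeatureProduct_eq_cos_add_cos]
    push_cast at hcos
    rw [integral_add (integrable_const _) hcos, integral_const, probReal_univ, one_smul]
    have := integral_cos_add_nat_mul_unifPhase (ω ⬝ᵥ (x + x')) two_ne_zero
    push_cast at this
    rw [this, add_zero]
  rw [integral_prod _ (.of_mem_Icc (-2) 2 (measurable_fourierFeatureProduct x x').aemeasurable
    (ae_of_all _ (fourierFeatureProduct_mem_Icc x x')))]
  simp_rw [hphase]
  exact integral_cos_dotProduct_gaussianReal v (x - x')

end FourierFeatures

/-- Pointwise concentration of the random Fourier feature kernel estimate: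
`P(|z(x)ᵀz(x') − K_RBF(x, x')| ≥ ε) ≤ 2 exp(−D ε² / 8)`. -/
theorem stmt13 (d D : ℕ) (σ : ℝ)
    (x x' : Fin d → ℝ) (ε : ℝ) (hε : 0 < ε) :
    (Measure.pi fun _ : Fin D =>
        (Measure.pi fun _ : Fin d =>
          gaussianReal 0 (⟨(σ ^ 2)⁻¹, by positivity⟩ : NNReal)).prod unifPhase)
      {w : Fin D → (Fin d → ℝ) × ℝ |
        ε ≤ |rff d D w x ⬝ᵥ rff d D w x' - KRBF σ x x'|}
      ≤ ENNReal.ofReal (2 * Real.exp (-(D : ℝ) * ε ^ 2 / 8)) := by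
  set v : ℝ≥0 := ⟨(σ ^ 2)⁻¹, by positivity⟩
  have hK : KRBF σ x x' = ∫ p, fourierFeatureProduct x x' p
      ∂(Measure.pi fun _ : Fin d ↦ gaussianReal 0 v).prod unifPhase := by
    rw [integral_fourierFeatureProduct, KRBF, show (v : ℝ) = (σ ^ 2)⁻¹ from rfl]
    ring_nf
  simp_rw [rff_dotProduct_rff, hK]
  refine (measure_abs_mean_sub_integral_ge_le (measurable_fourierFeatureProduct x x')
    (fourierFeatureProduct_mem_Icc x x') D hε.le).trans_eq ?_
  ring_nf
end
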